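/- arXiv:1207.6868 — 2 statements merged into one kernel-verified Lean document; each statement's English description precedes it below -/
import Mathlib

section
/- Grouping effect bound for the adaptive BerHu penalized least squares: let y ∈ ℝⁿ, X an n×p matrix with columns x₁,…,x_p, λ > 0, L > 0, and positive weights ŵ₁,…,ŵ_p. Let (α̂, β̂, τ̂) minimize Σᵢ(yᵢ − α − xᵢᵀβ)² + λ·τ·(Σⱼ 1/ŵⱼ + Σⱼ ŵⱼ B_L(β̂ⱼ/τ)) over α ∈ ℝ, β ∈ ℝ^p, τ > 0 (with the penalty extended by 0 at (β,τ)=(0,0) and +∞ for τ=0, β≠0). If β̂ᵢ ≠ 0 and β̂ⱼ ≠ 0, then |ŵᵢβ̂ᵢ − ŵⱼβ̂ⱼ| ≤ (2Lτ̂/λ)·‖y‖₂·sqrt(‖xᵢ‖₂² + ‖xⱼ‖₂² − 2C_{i,j}·xᵢᵀxⱼ), where C_{i,j} = min(1, |β̂ⱼ|/(Lτ̂), |β̂ᵢ|/(Lτ̂), |β̂ᵢβ̂ⱼ|/(Lτ̂)²). -/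
/-!
At a minimizer every nonzero coordinate satisfies the stationarity condition
`λ ŵₖ B_L'(β̂ₖ/τ̂) = 2 xₖᵀ r` for the residual `r = y - α̂ - X β̂`. Since
`B_L'(u) = sign u · max(1, |u|/L)` and `min(1, a) · max(1, a) = a`, this says
`ŵₖ β̂ₖ = (2Lτ̂/λ) cₖ xₖᵀ r` with `cₖ = min(1, |β̂ₖ|/(Lτ̂))`, and `C_{i,j} = cᵢ cⱼ`.
Hence `ŵᵢβ̂ᵢ - ŵⱼβ̂ⱼ = (2Lτ̂/λ) (cᵢxᵢ - cⱼxⱼ)ᵀ r`; conclude by Cauchy–Schwarz, with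
`‖r‖ ≤ ‖y‖` (compare with `β = 0`) and `‖cᵢxᵢ - cⱼxⱼ‖² ≤ ‖xᵢ‖² + ‖xⱼ‖² - 2cᵢcⱼ xᵢᵀxⱼ`
as `cᵢ, cⱼ ≤ 1`.
-/

open Finset

noncomputable def berhu (L z : ℝ) : ℝ := if |z| ≤ L then |z| else (z ^ 2 + L ^ 2) / (2 * L)

/-- The adaptive BerHu penalized least squares objective (for τ > 0). -/
noncomputable def berhuObj {n p : ℕ} (y : Fin n → ℝ) (X : Matrix (Fin n) (Fin p) ℝ)
    (lam L : ℝ) (w : Fin p → ℝ) (α : ℝ) (β : Fin p → ℝ) (τ : ℝ) : ℝ :=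
  (∑ i, (y i - α - ∑ j, X i j * β j) ^ 2) +
    lam * (τ * ((∑ j, 1 / w j) + ∑ j, w j * berhu L (β j / τ)))

theorem Finset.sum_apply_update {ι α M : Type*} [Fintype ι] [DecidableEq ι] [AddCommMonoid M]
    (g : ι → α → M) (β : ι → α) (k : ι) (t : α) :
    ∑ l, g l (Function.update β k t l) = g k t + ∑ l ∈ univ \ {k}, g l (β l) :=
  (sum_congr rfl fun l _ => Function.apply_update g β k t l).trans
    (sum_update_of_mem (mem_univ k) _ _)

theorem hasDerivAt_sum_apply_update {ι 𝕜 F : Type*} [Fintype ι] [DecidableEq ι]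
    [NontriviallyNormedField 𝕜] [NormedAddCommGroup F] [NormedSpace 𝕜 F] {g : ι → 𝕜 → F}
    {β : ι → 𝕜} {k : ι} {g' : F} (hg : HasDerivAt (g k) g' (β k)) :
    HasDerivAt (fun t => ∑ l, g l (Function.update β k t l)) g' (β k) := by
  simp_rw [sum_apply_update g β k]
  exact hg.add_const _

theorem abs_sum_mul_le_sqrt_mul_sqrt {ι : Type*} (s : Finset ι) (f g : ι → ℝ) :
    |∑ i ∈ s, f i * g i| ≤ √(∑ i ∈ s, f i ^ 2) * √(∑ i ∈ s, g i ^ 2) := by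
  rw [← Real.sqrt_mul (sum_nonneg fun i _ => sq_nonneg (f i))]
  exact Real.abs_le_sqrt (sum_mul_sq_le_sq_mul_sq s f g)

theorem sum_sub_mul_sq_le {ι : Type*} (s : Finset ι) {a b : ℝ} (ha₀ : 0 ≤ a) (ha₁ : a ≤ 1)
    (hb₀ : 0 ≤ b) (hb₁ : b ≤ 1) (x z : ι → ℝ) :
    ∑ m ∈ s, (a * x m - b * z m) ^ 2 ≤
      (∑ m ∈ s, x m ^ 2) + (∑ m ∈ s, z m ^ 2) - 2 * (a * b) * ∑ m ∈ s, x m * z m := by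
  rw [mul_sum, ← sum_add_distrib, ← sum_sub_distrib]
  refine sum_le_sum fun m _ => ?_
  have hax : a ^ 2 * x m ^ 2 ≤ x m ^ 2 :=
    mul_le_of_le_one_left (sq_nonneg _) (pow_le_one₀ ha₀ ha₁)
  have hbz : b ^ 2 * z m ^ 2 ≤ z m ^ 2 :=
    mul_le_of_le_one_left (sq_nonneg _) (pow_le_one₀ hb₀ hb₁)
  nlinarith

theorem min_one_mul_min_one {a b : ℝ} (ha : 0 ≤ a) (hb : 0 ≤ b) :
    min 1 a * min 1 b = min (min 1 b) (min a (a * b)) := by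
  rw [min_mul_of_nonneg _ _ (le_min zero_le_one hb), one_mul, mul_min_of_nonneg _ _ ha, mul_one]

theorem hasDerivAt_max_zero_sq (u : ℝ) :
    HasDerivAt (fun v : ℝ => max v 0 ^ 2) (2 * max u 0) u := by
  rcases lt_trichotomy u 0 with hu | rfl | hu
  · have hloc : (fun v : ℝ => max v 0 ^ 2) =ᶠ[nhds u] fun _ => 0 :=
      (eventually_lt_nhds hu).mono fun v hv => by simp [hv.le]
    simpa [hu.le] using (hasDerivAt_const u (0 : ℝ)).congr_of_eventuallyEq hloc
  · have hle : HasDerivWithinAt (fun v : ℝ => max v 0 ^ 2) 0 (Set.Iic 0) 0 :=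
      (hasDerivWithinAt_const 0 _ 0).congr
        (fun v hv => by simp [max_eq_right (Set.mem_Iic.1 hv)]) (by simp)
    have hge : HasDerivWithinAt (fun v : ℝ => max v 0 ^ 2) 0 (Set.Ici 0) 0 := by
      simpa using ((hasDerivAt_pow 2 (0 : ℝ)).hasDerivWithinAt).congr
        (fun v hv => by simp [max_eq_left (Set.mem_Ici.1 hv)]) (by simp)
    simpa [Set.Iic_union_Ici] using hle.union hge
  · have hloc : (fun v : ℝ => max v 0 ^ 2) =ᶠ[nhds u] fun v => v ^ 2 :=
      (eventually_gt_nhds hu).mono fun v hv => by simp [hv.le]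
    simpa [hu.le] using (hasDerivAt_pow 2 u).congr_of_eventuallyEq hloc

section BerHu

variable {L : ℝ}

theorem berhu_eq_abs_add (hL : 0 < L) (z : ℝ) :
    berhu L z = |z| + max (|z| - L) 0 ^ 2 / (2 * L) := by
  unfold berhu
  split_ifs with h
  · simp [h]
  · rw [max_eq_left (by linarith)]
    field_simp
    nlinarith [sq_abs z]

theorem berhu_nonneg (hL : 0 < L) (z : ℝ) : 0 ≤ berhu L z := by
  rw [berhu_eq_abs_add hL]
  positivity

noncomputable def berhuDeriv (L z : ℝ) : ℝ := SignType.sign z * max 1 (|z| / L)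

theorem hasDerivAt_berhu (hL : 0 < L) {z : ℝ} (hz : z ≠ 0) :
    HasDerivAt (berhu L) (berhuDeriv L z) z := by
  have h := (hasDerivAt_abs hz).add
    (((hasDerivAt_max_zero_sq (|z| - L)).comp z ((hasDerivAt_abs hz).sub_const L)).div_const
      (2 * L))
  rw [funext (berhu_eq_abs_add hL)]
  refine h.congr_deriv ?_
  have hmax : max 1 (|z| / L) = 1 + max (|z| - L) 0 / L := by
    rcases le_total |z| L with hzL | hzL
    · rw [max_eq_left ((div_le_one hL).2 hzL), max_eq_right (by linarith)]
      simp
    · rw [max_eq_right ((one_le_div hL).2 hzL), max_eq_left (by linarith)]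
      field_simp
      ring
  rw [berhuDeriv, hmax]
  field_simp

theorem mul_min_mul_berhuDeriv (hL : 0 < L) (u : ℝ) :
    L * min 1 (|u| / L) * berhuDeriv L u = u := by
  calc L * min 1 (|u| / L) * berhuDeriv L u
      = SignType.sign u * (L * (min 1 (|u| / L) * max 1 (|u| / L))) := by
        rw [berhuDeriv]; ring
    _ = u := by rw [min_mul_max, one_mul, mul_div_cancel₀ _ hL.ne', sign_mul_abs]

end BerHu

def linRegResidual {ι κ : Type*} [Fintype κ] (y : ι → ℝ) (X : Matrix ι κ ℝ) (α : ℝ) (β : κ → ℝ) :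
    ι → ℝ :=
  fun m => y m - α - ∑ l, X m l * β l

section Objective

variable {n p : ℕ} (y : Fin n → ℝ) (X : Matrix (Fin n) (Fin p) ℝ) {lam L : ℝ}
  (w : Fin p → ℝ) (α : ℝ) (β : Fin p → ℝ) {τ : ℝ}

theorem sum_linRegResidual_sq_le_berhuObj (hlam : 0 ≤ lam) (hL : 0 < L) (hw : ∀ j, 0 < w j)
    (hτ : 0 ≤ τ) : ∑ m, linRegResidual y X α β m ^ 2 ≤ berhuObj y X lam L w α β τ := by
  have hpen : 0 ≤ lam * (τ * ((∑ j, 1 / w j) + ∑ j, w j * berhu L (β j / τ))) :=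
    mul_nonneg hlam <| mul_nonneg hτ <| add_nonneg
      (sum_nonneg fun j _ => (one_div_pos.2 (hw j)).le)
      (sum_nonneg fun j _ => mul_nonneg (hw j).le (berhu_nonneg hL _))
  exact le_add_of_nonneg_right hpen

theorem hasDerivAt_berhuObj_update (hL : 0 < L) (hτ : τ ≠ 0) {k : Fin p} (hk : β k ≠ 0) :
    HasDerivAt (fun t => berhuObj y X lam L w α (Function.update β k t) τ)
      (lam * w k * berhuDeriv L (β k / τ) - 2 * ∑ m, X m k * linRegResidual y X α β m) (β k) := by
  have hrss : ∀ m, HasDerivAt (fun t => (y m - α - ∑ l, X m l * Function.update β k t l) ^ 2)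
      (2 * linRegResidual y X α β m * -X m k) (β k) := fun m => by
    simpa [linRegResidual] using
      ((hasDerivAt_sum_apply_update (g := fun l s => X m l * s)
        ((hasDerivAt_id (β k)).const_mul (X m k))).const_sub (y m - α)).fun_pow 2
  have hpen := hasDerivAt_sum_apply_update (g := fun l s => w l * berhu L (s / τ))
    (((hasDerivAt_berhu hL (div_ne_zero hk hτ)).comp (β k)
      ((hasDerivAt_id (β k)).div_const τ)).const_mul (w k))
  unfold berhuObj
  refine ((HasDerivAt.fun_sum (u := univ) fun m _ => hrss m).fun_add
    ((hpen.const_add (∑ j, 1 / w j)).const_mul τ |>.const_mul lam)).congr_deriv ?_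
  simp only [mul_neg, sum_neg_distrib, mul_assoc, mul_comm (linRegResidual y X α β _), ← mul_sum]
  field_simp
  ring

theorem lam_mul_berhuDeriv_eq_of_berhuObj_min (hL : 0 < L) (hτ : τ ≠ 0)
    (hmin : ∀ β', berhuObj y X lam L w α β τ ≤ berhuObj y X lam L w α β' τ)
    {k : Fin p} (hk : β k ≠ 0) :
    lam * w k * berhuDeriv L (β k / τ) = 2 * ∑ m, X m k * linRegResidual y X α β m := by
  have hloc : IsLocalMin (fun t => berhuObj y X lam L w α (Function.update β k t) τ) (β k) :=
    Filter.Eventually.of_forall fun t => by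
      simpa only [Function.update_eq_self] using hmin (Function.update β k t)
  exact sub_eq_zero.1 (hloc.hasDerivAt_eq_zero (hasDerivAt_berhuObj_update y X w α β hL hτ hk))

theorem mul_eq_of_berhuObj_min (hlam : lam ≠ 0) (hL : 0 < L) (hτ : 0 < τ)
    (hmin : ∀ β', berhuObj y X lam L w α β τ ≤ berhuObj y X lam L w α β' τ)
    {k : Fin p} (hk : β k ≠ 0) :
    w k * β k = 2 * L * τ / lam *
      (min 1 (|β k| / (L * τ)) * ∑ m, X m k * linRegResidual y X α β m) := by
  have hstat := lam_mul_berhuDeriv_eq_of_berhuObj_min y X w α β hL hτ.ne' hmin hk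
  have hβ := mul_min_mul_berhuDeriv hL (β k / τ)
  rw [abs_div, abs_of_pos hτ, div_div, mul_comm τ L] at hβ
  field_simp at hβ ⊢
  linear_combination (L * τ * min 1 (|β k| / (L * τ))) * hstat - (w k * lam) * hβ

end Objective

theorem berhu_grouping_effect {n p : ℕ} (y : Fin n → ℝ) (X : Matrix (Fin n) (Fin p) ℝ)
    (lam L : ℝ) (hlam : 0 < lam) (hL : 0 < L) (w : Fin p → ℝ) (hw : ∀ j, 0 < w j)
    (αhat : ℝ) (βhat : Fin p → ℝ) (τhat : ℝ) (hτ : 0 < τhat)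
    (hmin : ∀ (α : ℝ) (β : Fin p → ℝ) (τ : ℝ), 0 < τ →
      berhuObj y X lam L w αhat βhat τhat ≤ berhuObj y X lam L w α β τ)
    (hmin0 : ∀ α : ℝ, berhuObj y X lam L w αhat βhat τhat ≤ ∑ i, (y i - α) ^ 2)
    (i j : Fin p) (hi : βhat i ≠ 0) (hj : βhat j ≠ 0) :
    |w i * βhat i - w j * βhat j| ≤
      (2 * L * τhat / lam) * Real.sqrt (∑ i', y i' ^ 2) *
        Real.sqrt ((∑ k, X k i ^ 2) + (∑ k, X k j ^ 2) -
          2 * (min (min 1 (|βhat j| / (L * τhat)))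
                (min (|βhat i| / (L * τhat)) (|βhat i * βhat j| / (L * τhat) ^ 2))) *
            ∑ k, X k i * X k j) := by
  set c : Fin p → ℝ := fun k => min 1 (|βhat k| / (L * τhat))
  have hc₀ : ∀ k, 0 ≤ c k := fun k => le_min zero_le_one (by positivity)
  have hc₁ : ∀ k, c k ≤ 1 := fun k => min_le_left _ _
  have hC : min (min 1 (|βhat j| / (L * τhat)))
      (min (|βhat i| / (L * τhat)) (|βhat i * βhat j| / (L * τhat) ^ 2)) = c i * c j := by
    rw [abs_mul, sq, mul_div_mul_comm]
    exact (min_one_mul_min_one (by positivity) (by positivity)).symm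
  set r := linRegResidual y X αhat βhat
  have hmin' : ∀ β, berhuObj y X lam L w αhat βhat τhat ≤ berhuObj y X lam L w αhat β τhat :=
    fun β => hmin αhat β τhat hτ
  have hdiff : w i * βhat i - w j * βhat j =
      2 * L * τhat / lam * ∑ m, (c i * X m i - c j * X m j) * r m := by
    rw [mul_eq_of_berhuObj_min y X w αhat βhat hlam.ne' hL hτ hmin' hi,
      mul_eq_of_berhuObj_min y X w αhat βhat hlam.ne' hL hτ hmin' hj, ← mul_sub, mul_sum,
      mul_sum, ← sum_sub_distrib]
    simp only [sub_mul, mul_assoc, c, r]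
  have hr : ∑ m, r m ^ 2 ≤ ∑ m, y m ^ 2 := by
    simpa using (sum_linRegResidual_sq_le_berhuObj y X w αhat βhat hlam.le hL hw hτ.le).trans
      (hmin0 0)
  rw [hC, hdiff, abs_mul, abs_of_pos (by positivity), mul_assoc (2 * L * τhat / lam)]
  gcongr
  calc |∑ m, (c i * X m i - c j * X m j) * r m|
      ≤ √(∑ m, (c i * X m i - c j * X m j) ^ 2) * √(∑ m, r m ^ 2) :=
        abs_sum_mul_le_sqrt_mul_sqrt _ _ _
    _ ≤ √(∑ m, (c i * X m i - c j * X m j) ^ 2) * √(∑ m, y m ^ 2) := by gcongr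
    _ ≤ _ := by
        rw [mul_comm]
        gcongr
        exact sum_sub_mul_sq_le _ (hc₀ i) (hc₁ i) (hc₀ j) (hc₁ j) _ _
end

section
/- At any minimizer (α̂, β̂, τ̂) of the adaptive BerHu penalized least squares with β̂ ≠ 0 (hence τ̂ > 0), the stationarity condition in τ reads: Σ_{j : |β̂ⱼ| > Lτ̂} ŵⱼ·( (β̂ⱼ/τ̂)²/(2L) − L/2 ) = Σ_{j=1}^p 1/ŵⱼ. In particular, the set G = {j : |β̂ⱼ| > Lτ̂} is non-empty. -/
open Filter Topology Set

theorem HasDerivAt.of_eventuallyEq_Iic_Ici {F : Type*} [NormedAddCommGroup F] [NormedSpace ℝ F]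
    {f g h : ℝ → F} {a : ℝ} {f' : F} (hg : HasDerivAt g f' a) (hh : HasDerivAt h f' a)
    (hfg : f =ᶠ[𝓝[≤] a] g) (hfh : f =ᶠ[𝓝[≥] a] h) : HasDerivAt f f' a := by
  have hleft :=
    hg.hasDerivWithinAt.congr_of_eventuallyEq hfg (hfg.eq_of_nhdsWithin (mem_Iic.2 le_rfl))
  have hright :=
    hh.hasDerivWithinAt.congr_of_eventuallyEq hfh (hfh.eq_of_nhdsWithin (mem_Ici.2 le_rfl))
  exact (hleft.union hright).hasDerivAt (by simp [Iic_union_Ici])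

section Perspective

variable {L b τ : ℝ}

theorem mul_berhu_div_of_le (hτ : 0 < τ) (hb : |b| ≤ L * τ) : τ * berhu L (b / τ) = |b| := by
  have hle : |b / τ| ≤ L := by rwa [abs_div, abs_of_pos hτ, div_le_iff₀ hτ]
  rw [berhu, if_pos hle, abs_div, abs_of_pos hτ]
  field_simp

theorem berhu_of_le_abs {z : ℝ} (hL : L ≠ 0) (hz : L ≤ |z|) :
    berhu L z = (z ^ 2 + L ^ 2) / (2 * L) := by
  rcases hz.eq_or_lt with hz | hz
  · rw [berhu, if_pos hz.ge, ← sq_abs z, ← hz]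
    field_simp
    ring
  · rw [berhu, if_neg hz.not_ge]

theorem mul_berhu_div_of_le_abs (hL : L ≠ 0) (hτ : 0 < τ) (hb : L * τ ≤ |b|) :
    τ * berhu L (b / τ) = (b ^ 2 * τ⁻¹ + L ^ 2 * τ) / (2 * L) := by
  rw [berhu_of_le_abs hL (by rwa [abs_div, abs_of_pos hτ, le_div_iff₀ hτ])]
  field_simp

theorem hasDerivAt_quadratic_branch (hL : L ≠ 0) (hτ : 0 < τ) :
    HasDerivAt (fun t : ℝ => (b ^ 2 * t⁻¹ + L ^ 2 * t) / (2 * L))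
      (L / 2 - (b / τ) ^ 2 / (2 * L)) τ := by
  have h := (((hasDerivAt_inv hτ.ne').const_mul (b ^ 2)).add
    ((hasDerivAt_id τ).const_mul (L ^ 2))).div_const (2 * L)
  exact h.congr_deriv (by field_simp; ring)

theorem hasDerivAt_mul_berhu_div (hL : 0 < L) (hτ : 0 < τ) :
    HasDerivAt (fun t => t * berhu L (b / t))
      (if L * τ < |b| then L / 2 - (b / τ) ^ 2 / (2 * L) else 0) τ := by
  have hq := hasDerivAt_quadratic_branch (b := b) hL.ne' hτ
  have hpos : ∀ᶠ t in 𝓝 τ, 0 < t := lt_mem_nhds hτ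
  rcases lt_trichotomy (L * τ) |b| with h | h | h
  · rw [if_pos h]
    refine hq.congr_of_eventuallyEq ?_
    filter_upwards [hpos, (continuousAt_const.mul continuousAt_id).eventually_lt
      continuousAt_const h] with t ht hbt
    exact mul_berhu_div_of_le_abs hL.ne' ht hbt.le
  · have hzero : L / 2 - (b / τ) ^ 2 / (2 * L) = 0 := by
      rw [div_pow, ← sq_abs b, ← h]
      field_simp
      ring
    rw [if_neg h.not_lt]
    rw [hzero] at hq
    refine hq.of_eventuallyEq_Iic_Ici (hasDerivAt_const τ |b|) ?_ ?_
    · filter_upwards [nhdsWithin_le_nhds hpos, self_mem_nhdsWithin] with t ht htτ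
      exact mul_berhu_div_of_le_abs hL.ne' ht (h ▸ mul_le_mul_of_nonneg_left htτ hL.le)
    · filter_upwards [nhdsWithin_le_nhds hpos, self_mem_nhdsWithin] with t ht htτ
      exact mul_berhu_div_of_le ht (h ▸ mul_le_mul_of_nonneg_left htτ hL.le)
  · rw [if_neg h.not_gt]
    refine (hasDerivAt_const τ |b|).congr_of_eventuallyEq ?_
    filter_upwards [hpos, continuousAt_const.eventually_lt
      (continuousAt_const.mul continuousAt_id) h] with t ht hbt
    exact mul_berhu_div_of_le ht hbt.le

end Perspective

theorem hasDerivAt_berhuObj {n p : ℕ} (y : Fin n → ℝ) (X : Matrix (Fin n) (Fin p) ℝ)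
    (lam : ℝ) {L : ℝ} (hL : 0 < L) (w : Fin p → ℝ) (α : ℝ) (β : Fin p → ℝ) {τ : ℝ} (hτ : 0 < τ) :
    HasDerivAt (berhuObj y X lam L w α β)
      (lam * ((∑ j, 1 / w j) +
        ∑ j, w j * if L * τ < |β j| then L / 2 - (β j / τ) ^ 2 / (2 * L) else 0)) τ := by
  have hpersp : HasDerivAt (fun t => ∑ j, w j * (t * berhu L (β j / t)))
      (∑ j, w j * if L * τ < |β j| then L / 2 - (β j / τ) ^ 2 / (2 * L) else 0) τ :=
    HasDerivAt.fun_sum fun j _ => (hasDerivAt_mul_berhu_div hL hτ).const_mul (w j)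
  have hobj : berhuObj y X lam L w α β = fun t => (∑ i, (y i - α - ∑ j, X i j * β j) ^ 2) +
      lam * (t * ∑ j, 1 / w j + ∑ j, w j * (t * berhu L (β j / t))) := by
    ext t
    simp only [berhuObj, mul_add, Finset.mul_sum, mul_left_comm t]
  rw [hobj]
  exact ((((hasDerivAt_id τ).mul_const _).add hpersp).const_mul lam).const_add _ |>.congr_deriv
    (by simp)

theorem berhu_tau_stationarity {n p : ℕ} (y : Fin n → ℝ) (X : Matrix (Fin n) (Fin p) ℝ)
    (lam L : ℝ) (hlam : 0 < lam) (hL : 0 < L) (w : Fin p → ℝ) (hw : ∀ j, 0 < w j)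
    (αhat : ℝ) (βhat : Fin p → ℝ) (hβ : βhat ≠ 0) (τhat : ℝ) (hτ : 0 < τhat)
    (hmin : ∀ (α : ℝ) (β : Fin p → ℝ) (τ : ℝ), 0 < τ →
      berhuObj y X lam L w αhat βhat τhat ≤ berhuObj y X lam L w α β τ) :
    (∑ j ∈ Finset.univ.filter (fun j : Fin p => L * τhat < |βhat j|),
        w j * ((βhat j / τhat) ^ 2 / (2 * L) - L / 2)) = (∑ j, 1 / w j) ∧
      (Finset.univ.filter (fun j : Fin p => L * τhat < |βhat j|)).Nonempty := by
  set G := Finset.univ.filter (fun j : Fin p => L * τhat < |βhat j|)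
  have hlocmin : IsLocalMin (berhuObj y X lam L w αhat βhat) τhat := by
    filter_upwards [lt_mem_nhds hτ] with τ hτ' using hmin αhat βhat τ hτ'
  have hcrit := hlocmin.hasDerivAt_eq_zero (hasDerivAt_berhuObj y X lam hL w αhat βhat hτ)
  have hsum : (∑ j, w j *
      if L * τhat < |βhat j| then L / 2 - (βhat j / τhat) ^ 2 / (2 * L) else 0) =
      -∑ j ∈ G, w j * ((βhat j / τhat) ^ 2 / (2 * L) - L / 2) := by
    rw [Finset.sum_filter, ← Finset.sum_neg_distrib]
    refine Finset.sum_congr rfl fun j _ => ?_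
    split_ifs <;> ring
  have hstat : ∑ j ∈ G, w j * ((βhat j / τhat) ^ 2 / (2 * L) - L / 2) = ∑ j, 1 / w j := by
    rw [hsum] at hcrit
    linarith [(mul_eq_zero.1 hcrit).resolve_left hlam.ne']
  refine ⟨hstat, Finset.nonempty_iff_ne_empty.2 fun hG => ?_⟩
  obtain ⟨j₀, -⟩ := Function.ne_iff.1 hβ
  have hpenalty : 0 < ∑ j, 1 / w j :=
    Finset.sum_pos (fun j _ => one_div_pos.2 (hw j)) ⟨j₀, Finset.mem_univ _⟩
  rw [hG, Finset.sum_empty] at hstat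
  linarith
end
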